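/- For every real v > 0 and all α > 0, c > 0, t > 0, ∫_0^t Γ(v+1) · (2/(αcs))^v · J_v(αcs) · (1/(π√(s(t−s)))) ds = (v/π) · ∫_0^1 z^{−1/2}(1−z)^{−1/2} · ( ∫_0^1 (1−w)^{v−1} · J_0(αctz√w) dw ) dz. (This is the conditional characteristic function of the random motion X_m at the Brownian sojourn time Γ(t) = ∫_0^t 1_{B(s)>0} ds, given n Poisson events, with v = n/2 or v = n+1; it shows X_m(Γ(t)) equals in distribution X_0 run for the random time Γ(t)√W with W ∼ Beta(1, v).) -/

import Mathlib

/-!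
The heart of the matter is Sonine's first finite integral
`Γ(v+1) (2/x)^v J_v(x) = v ∫₀¹ (1-w)^(v-1) J₀(x√w) dw`:
expanding `J₀(x√w)` as a power series in `w` and integrating term by term, the `k`-th term
produces the Beta integral `∫₀¹ w^k (1-w)^(v-1) dw = k! Γ(v) / Γ(k+v+1)`, which is exactly
the `k`-th coefficient of the series of `J_v`. The substitution `s = t z` then turns the
arcsine density into `z^(-1/2) (1-z)^(-1/2) / (π t)`.
-/

open MeasureTheory Real

/-- The Bessel function of the first kind of order `ν`, defined by its series
(so that `J_0(0) = 1`). -/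
noncomputable def besselJ (ν x : ℝ) : ℝ :=
  ∑' k : ℕ, (-1 : ℝ) ^ k * (x / 2) ^ (2 * (k : ℝ) + ν) /
    (Real.Gamma ((k : ℝ) + 1) * Real.Gamma ((k : ℝ) + ν + 1))

open Nat intervalIntegral

theorem integral_rpow_mul_one_sub_rpow {a b : ℝ} (ha : 0 < a) (hb : 0 < b) :
    ∫ x in (0 : ℝ)..1, x ^ (a - 1) * (1 - x) ^ (b - 1) = Gamma a * Gamma b / Gamma (a + b) := by
  have hβ := Complex.betaIntegral_eq_Gamma_mul_div a b (by simpa) (by simpa)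
  rw [Complex.betaIntegral, ← Complex.ofReal_add, Complex.Gamma_ofReal, Complex.Gamma_ofReal,
    Complex.Gamma_ofReal] at hβ
  refine Complex.ofReal_injective ?_
  rw [← intervalIntegral.integral_ofReal, Complex.ofReal_div, Complex.ofReal_mul, ← hβ]
  refine integral_congr fun x hx => ?_
  rw [Set.uIcc_of_le zero_le_one] at hx
  simp only [Complex.ofReal_mul]
  rw [Complex.ofReal_cpow hx.1, Complex.ofReal_cpow (sub_nonneg.2 hx.2)]
  push_cast
  rfl

theorem integral_pow_mul_one_sub_rpow (k : ℕ) {v : ℝ} (hv : 0 < v) :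
    ∫ w in (0 : ℝ)..1, w ^ k * (1 - w) ^ (v - 1) = k ! * Gamma v / Gamma (k + v + 1) := by
  have h := integral_rpow_mul_one_sub_rpow (a := k + 1) (b := v) (by positivity) hv
  simp only [add_sub_cancel_right, rpow_natCast, Gamma_nat_eq_factorial] at h
  rwa [add_right_comm] at h

theorem intervalIntegrable_one_sub_rpow {v : ℝ} (hv : 0 < v) :
    IntervalIntegrable (fun w : ℝ => (1 - w) ^ (v - 1)) volume 0 1 := by
  have h : IntervalIntegrable (fun w : ℝ => w ^ (v - 1)) volume 1 0 :=
    intervalIntegrable_rpow' (by linarith)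
  simpa using h.comp_sub_left 1

theorem hasSum_integral_one_sub_rpow_mul_tsum {v : ℝ} (hv : 0 < v) {a : ℕ → ℝ}
    (ha : Summable a) :
    HasSum (fun k => a k * (k ! * Gamma v / Gamma (k + v + 1)))
      (∫ w in (0 : ℝ)..1, (1 - w) ^ (v - 1) * ∑' k, a k * w ^ k) := by
  have hterm (k : ℕ) : ∫ w in (0 : ℝ)..1, (1 - w) ^ (v - 1) * (a k * w ^ k)
      = a k * (k ! * Gamma v / Gamma (k + v + 1)) := by
    rw [← integral_pow_mul_one_sub_rpow k hv, ← intervalIntegral.integral_const_mul]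
    congr 1 with w
    ring
  have hle (k : ℕ) {w : ℝ} (hw : w ∈ Set.uIoc (0 : ℝ) 1) : ‖a k * w ^ k‖ ≤ |a k| := by
    rw [Set.uIoc_of_le zero_le_one] at hw
    rw [norm_mul, Real.norm_eq_abs, norm_of_nonneg (pow_nonneg hw.1.le k)]
    exact mul_le_of_le_one_right (abs_nonneg _) (pow_le_one₀ hw.1.le hw.2)
  have hweight {w : ℝ} (hw : w ∈ Set.uIoc (0 : ℝ) 1) : 0 ≤ (1 - w) ^ (v - 1) := by
    rw [Set.uIoc_of_le zero_le_one] at hw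
    exact rpow_nonneg (sub_nonneg.2 hw.2) _
  simp_rw [← hterm]
  refine hasSum_integral_of_dominated_convergence (fun k w => (1 - w) ^ (v - 1) * |a k|)
    (fun k => (by fun_prop : Measurable _).aestronglyMeasurable)
    (fun k => .of_forall fun w hw => ?_) (.of_forall fun w _ => ha.abs.mul_left _) ?_
    (.of_forall fun w hw => ?_)
  · rw [norm_mul, norm_of_nonneg (hweight hw)]
    exact mul_le_mul_of_nonneg_left (hle k hw) (hweight hw)
  · simp_rw [tsum_mul_left]
    exact (intervalIntegrable_one_sub_rpow hv).mul_const _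
  · exact ((ha.abs.of_norm_bounded fun k => hle k hw).hasSum).mul_left _

theorem besselJ_zero_mul_sqrt (x : ℝ) {w : ℝ} (hw : 0 ≤ w) :
    besselJ 0 (x * √w) = ∑' k : ℕ, (-1) ^ k * (x / 2) ^ (2 * k) / (k ! : ℝ) ^ 2 * w ^ k := by
  refine tsum_congr fun k => ?_
  rw [add_zero, add_zero, Gamma_nat_eq_factorial,
    show 2 * (k : ℝ) = (2 * k : ℕ) by push_cast; ring, rpow_natCast,
    show x * √w / 2 = x / 2 * √w by ring, mul_pow, pow_mul √w, sq_sqrt hw]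
  ring

theorem summable_besselJ_zero_coeff (x : ℝ) :
    Summable fun k : ℕ => (-1 : ℝ) ^ k * (x / 2) ^ (2 * k) / (k ! : ℝ) ^ 2 := by
  refine (summable_pow_div_factorial ((x / 2) ^ 2)).of_norm_bounded fun k => ?_
  have hk : (1 : ℝ) ≤ k ! := mod_cast k.factorial_pos
  rw [pow_mul, norm_div, norm_mul, norm_pow, norm_neg, norm_one, one_pow, one_mul,
    norm_of_nonneg (by positivity), norm_of_nonneg (by positivity)]
  exact div_le_div_of_nonneg_left (by positivity) (by positivity) (le_self_pow₀ hk two_ne_zero)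

theorem gamma_mul_besselJ_eq_integral {v x : ℝ} (hv : 0 < v) (hx : 0 < x) :
    Gamma (v + 1) * (2 / x) ^ v * besselJ v x =
      v * ∫ w in (0 : ℝ)..1, (1 - w) ^ (v - 1) * besselJ 0 (x * √w) := by
  have hJ₀ : ∫ w in (0 : ℝ)..1, (1 - w) ^ (v - 1) * besselJ 0 (x * √w) =
      ∫ w in (0 : ℝ)..1, (1 - w) ^ (v - 1) *
        ∑' k : ℕ, (-1) ^ k * (x / 2) ^ (2 * k) / (k ! : ℝ) ^ 2 * w ^ k := by
    refine integral_congr_ae (.of_forall fun w hw => ?_)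
    rw [Set.uIoc_of_le zero_le_one] at hw
    rw [besselJ_zero_mul_sqrt x hw.1.le]
  rw [hJ₀, ← ((hasSum_integral_one_sub_rpow_mul_tsum hv
      (summable_besselJ_zero_coeff x)).mul_left v).tsum_eq, besselJ, ← tsum_mul_left]
  refine tsum_congr fun k => ?_
  have hx₂ : 0 < x / 2 := by positivity
  have hpow : (2 / x) ^ v * (x / 2) ^ (2 * (k : ℝ) + v) = (x / 2) ^ (2 * k) := by
    rw [rpow_add hx₂, show 2 * (k : ℝ) = (2 * k : ℕ) by push_cast; ring, rpow_natCast,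
      mul_left_comm, ← mul_rpow (by positivity) hx₂.le, show 2 / x * (x / 2) = 1 by field_simp,
      one_rpow, mul_one]
  have hk : (k ! : ℝ) ≠ 0 := mod_cast k.factorial_ne_zero
  have hΓ : Gamma (k + v + 1) ≠ 0 := (Gamma_pos_of_pos (by positivity)).ne'
  rw [Gamma_add_one hv.ne', Gamma_nat_eq_factorial, ← hpow]
  field_simp

theorem div_sqrt_mul_mul_sub_mul {t z : ℝ} (ht : 0 < t) (hz : z ∈ Set.Ioo (0 : ℝ) 1) :
    t / √(t * z * (t - t * z)) = z ^ (-(1 : ℝ) / 2) * (1 - z) ^ (-(1 : ℝ) / 2) := by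
  have hz₁ : 0 ≤ 1 - z := by linarith [hz.2]
  rw [show t * z * (t - t * z) = t ^ 2 * (z * (1 - z)) by ring, sqrt_mul (by positivity),
    sqrt_sq ht.le, sqrt_mul hz.1.le, neg_div, rpow_neg hz.1.le, rpow_neg hz₁, ← sqrt_eq_rpow,
    ← sqrt_eq_rpow]
  field_simp

/-- Conditional characteristic function of the random motion `X_m` at the Brownian
sojourn time `Γ(t)`:
`∫_0^t Γ(v+1)(2/(αcs))^v J_v(αcs) (1/(π√(s(t−s)))) ds
 = (v/π) ∫_0^1 z^{−1/2}(1−z)^{−1/2} ∫_0^1 (1−w)^{v−1} J_0(αctz√w) dw dz`. -/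
theorem stmt15 (v α c t : ℝ) (hv : 0 < v) (hα : 0 < α) (hc : 0 < c) (ht : 0 < t) :
    (∫ s in (0 : ℝ)..t,
      Real.Gamma (v + 1) * (2 / (α * c * s)) ^ v * besselJ v (α * c * s) *
        (1 / (π * Real.sqrt (s * (t - s))))) =
    v / π *
      ∫ z in (0 : ℝ)..1,
        z ^ (-(1 : ℝ) / 2) * (1 - z) ^ (-(1 : ℝ) / 2) *
          ∫ w in (0 : ℝ)..1, (1 - w) ^ (v - 1) * besselJ 0 (α * c * t * z * Real.sqrt w) := by
  have hsub (f : ℝ → ℝ) : ∫ s in (0 : ℝ)..t, f s = t * ∫ z in (0 : ℝ)..1, f (t * z) := by simp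
  rw [hsub, ← intervalIntegral.integral_const_mul, ← intervalIntegral.integral_const_mul]
  refine integral_congr_Ioo_of_le zero_le_one fun z hz => ?_
  have hx : 0 < α * c * t * z := by have := hz.1; positivity
  rw [show α * c * (t * z) = α * c * t * z by ring, gamma_mul_besselJ_eq_integral hv hx,
    ← div_sqrt_mul_mul_sub_mul ht hz]
  ring
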